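/- Let k ≥ 3 be an integer and C = ℓ_1 ∨ ⋯ ∨ ℓ_k a clause of width k over k distinct variables. Suppose α_start = α_end is an assignment that makes exactly one literal of C true. Let γ be a uniformly random assignment and, conditioned on γ, let σ_1 ∼ 𝒜(α_start ↔ γ) and σ_2 ∼ 𝒜(γ ↔ α_end) be independent uniformly random irredundant reconfiguration sequences. Then, with K := k - 1, P[σ_1 ∘ σ_2 satisfies C] = Σ_{j=0}^{K} (1/2) · (binom(K,j)/2^K) · [ (j/(j+1))^2 + 1 ], and this quantity is at least 1 - 2/k. -/

import Mathlib

/-- A literal is a variable together with a polarity (`true` = positive);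
a clause is a disjunction of literals, represented as the list of its literals
(its width is the length of this list). -/
abbrev Clause (V : Type) := List (V × Bool)

/-- An assignment satisfies a clause if it makes at least one literal true. -/
def satClause {V : Type} (α : V → Bool) (C : Clause V) : Bool :=
  C.any fun l => α l.1 == l.2

/-- The irredundant reconfiguration sequence from `α` towards `β` obtained by flipping the
variables listed in `l` one by one (each flip sets the variable to its value under `β`);
it starts at `α` and, if `l` enumerates all variables where `α` and `β` differ, ends at `β`. -/
def flipSeq {V : Type} [DecidableEq V] (α β : V → Bool) (l : List V) : List (V → Bool) :=
  l.scanl (fun g v => Function.update g v (β v)) α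

/-- The set of orderings of `α △ β` (the variables on which `α` and `β` differ);
these are in one-to-one correspondence with the irredundant reconfiguration sequences
`𝒜(α ↔ β)` from `α` to `β`, via `flipSeq`. -/
noncomputable def orders {V : Type} [Fintype V] [DecidableEq V] (α β : V → Bool) : Finset (List V) :=
  ((Finset.univ.filter fun v => α v ≠ β v).toList.permutations).toFinset

/-- The probability that a random reconfiguration sequence from `s` to `e`, uniformly
distributed over `𝒜(s ↔ γ ↔ e)` for a uniformly random assignment `γ` (equivalently, the
concatenation `σ₁ ∘ σ₂` of independent uniformly random irredundant sequences
`σ₁ ∼ 𝒜(s ↔ γ)` and `σ₂ ∼ 𝒜(γ ↔ e)`), satisfies the clause `C`, i.e. that every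
assignment in the sequence satisfies `C`. -/
noncomputable def probSatPair {k : ℕ} (C : Clause (Fin k)) (s e : Fin k → Bool) : ℝ :=
  (∑ γ : Fin k → Bool,
      (((orders s γ ×ˢ orders γ e).filter fun p =>
            (flipSeq s γ p.1 ++ flipSeq γ e p.2).all fun α => satClause α C).card : ℝ) /
        ((orders s γ ×ˢ orders γ e).card : ℝ)) / 2 ^ k

/-!
Since the clause mentions every variable, it has a unique falsifying assignment `τ`, and `s`
differs from `τ` only at the variable `v₀` of its unique true literal. Write `D` for the set of
variables where `s` and `γ` differ. The walk from `s` to `γ` passes through `τ` exactly when its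
first flip is at `v₀`, and the walk back from `γ` to `s` exactly when its last flip is at `v₀`.
If `v₀ ∈ D`, each of these events has probability `1 / #D`, and the two are independent;
otherwise neither can happen. Averaging `(1 - 1 / #D) ^ 2` over the `2 ^ (k - 1)` sets `D`
containing `v₀` gives the closed form, and the bound follows termwise from
`(x ^ 2 + 1) / 2 ≥ x` together with `∑ C(K, j) / (j + 1) = (2 ^ (K + 1) - 1) / (K + 1)`.
-/

open Finset

theorem List.mem_scanl_iff_exists_prefix {α β : Type*} {f : α → β → α} {a x : α} {l : List β} :
    x ∈ l.scanl f a ↔ ∃ t, t <+: l ∧ t.foldl f a = x := by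
  simp only [List.mem_iff_getElem, List.length_scanl, List.getElem_scanl]
  constructor
  · rintro ⟨i, -, rfl⟩
    exact ⟨l.take i, List.take_prefix _ _, rfl⟩
  · rintro ⟨t, ht, rfl⟩
    exact ⟨t.length, Nat.lt_succ_of_le ht.length_le, by rw [← List.prefix_iff_eq_take.mp ht]⟩

theorem foldl_update_apply {V X : Type*} [DecidableEq V] (α β : V → X) (t : List V) (v : V) :
    t.foldl (fun g u => Function.update g u (β u)) α v = if v ∈ t then β v else α v := by
  induction t generalizing α with
  | nil => simp
  | cons a t ih =>
    rw [List.foldl_cons, ih]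
    by_cases hv : v ∈ t
    · simp [hv]
    · by_cases hva : v = a <;> simp [hv, hva]

section Flip

variable {V : Type} [DecidableEq V]

theorem mem_flipSeq_iff {α β ω : V → Bool} {l : List V} :
    ω ∈ flipSeq α β l ↔ ∃ t, t <+: l ∧ (fun v => if v ∈ t then β v else α v) = ω := by
  simp only [flipSeq, List.mem_scanl_iff_exists_prefix]
  refine exists_congr fun t => and_congr_right fun _ => ?_
  rw [show t.foldl _ α = _ from funext (foldl_update_apply α β t)]

variable {s γ τ : V → Bool} {v₀ : V}

theorem flip_eq_iff_eq_singleton (hτ : ∀ v, s v ≠ τ v ↔ v = v₀) {u : List V} (hu : u.Nodup)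
    (huD : ∀ v ∈ u, s v ≠ γ v) :
    (fun v => if v ∈ u then γ v else s v) = τ ↔ u = [v₀] := by
  rw [← List.perm_singleton, List.perm_ext_iff_of_nodup hu (List.nodup_singleton _), funext_iff]
  refine forall_congr' fun v => ?_
  have hτv := hτ v
  have huDv := huD v
  rw [List.mem_singleton]
  by_cases hvu : v ∈ u <;> revert hτv huDv <;> cases s v <;> cases γ v <;> cases τ v <;> simp_all

theorem flip_prefix_eq_flip_suffix {t u : List V} (h : (t ++ u).Nodup)
    (hD : ∀ v, v ∈ t ++ u ↔ s v ≠ γ v) :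
    (fun v => if v ∈ t then s v else γ v) = fun v => if v ∈ u then γ v else s v := by
  funext v
  have hdisj := List.disjoint_of_nodup_append h
  have hDv := hD v
  by_cases hvt : v ∈ t
  · simp [hvt, List.disjoint_left.mp hdisj hvt]
  · by_cases hvu : v ∈ u <;> simp_all

theorem mem_flipSeq_iff_head?_eq (hτ : ∀ v, s v ≠ τ v ↔ v = v₀) {p : List V} (hp : p.Nodup)
    (hpD : ∀ v, v ∈ p ↔ s v ≠ γ v) :
    τ ∈ flipSeq s γ p ↔ p.head? = some v₀ := by
  rw [mem_flipSeq_iff, ← List.singleton_prefix_iff_head?_eq_some]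
  constructor
  · rintro ⟨t, ht, h⟩
    rw [flip_eq_iff_eq_singleton hτ (ht.sublist.nodup hp)
      fun v hv => (hpD v).1 (ht.subset hv)] at h
    exact h ▸ ht
  · intro h
    exact ⟨_, h, (flip_eq_iff_eq_singleton hτ (List.nodup_singleton _)
      fun v hv => (hpD v).1 (h.subset hv)).2 rfl⟩

theorem mem_flipSeq_iff_getLast?_eq (hτ : ∀ v, s v ≠ τ v ↔ v = v₀) {p : List V} (hp : p.Nodup)
    (hpD : ∀ v, v ∈ p ↔ s v ≠ γ v) :
    τ ∈ flipSeq γ s p ↔ p.getLast? = some v₀ := by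
  rw [mem_flipSeq_iff, ← List.singleton_suffix_iff_getLast?_eq_some]
  constructor
  · rintro ⟨t, ⟨u, rfl⟩, h⟩
    rw [flip_prefix_eq_flip_suffix hp hpD, flip_eq_iff_eq_singleton hτ (List.nodup_append.1 hp).2.1
      fun v hv => (hpD v).1 (List.mem_append_right t hv)] at h
    exact h ▸ List.suffix_append t u
  · rintro ⟨t, rfl⟩
    refine ⟨t, List.prefix_append t [v₀], ?_⟩
    rw [flip_prefix_eq_flip_suffix hp hpD, flip_eq_iff_eq_singleton hτ (List.nodup_singleton _)
      fun v hv => (hpD v).1 (List.mem_append_right t hv)]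

end Flip

section Permutations

variable {V : Type*} [DecidableEq V]

theorem card_permutations_filter_head?_eq {L : List V} (hL : L.Nodup) {a : V} (ha : a ∈ L) :
    (L.permutations.toFinset.filter (·.head? = some a)).card = (L.length - 1).factorial := by
  have himg : L.permutations.toFinset.filter (·.head? = some a) =
      (L.erase a).permutations.toFinset.image (a :: ·) := by
    ext p
    simp only [mem_filter, List.mem_toFinset, List.mem_permutations, mem_image,
      List.head?_eq_some_iff]
    constructor
    · rintro ⟨hperm, q, rfl⟩
      exact ⟨q, (List.cons_perm_iff_perm_erase.1 hperm).2, rfl⟩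
    · rintro ⟨q, hq, rfl⟩
      exact ⟨List.cons_perm_iff_perm_erase.2 ⟨ha, hq⟩, q, rfl⟩
  rw [himg, card_image_of_injective _ List.cons_injective,
    List.toFinset_card_of_nodup (List.nodup_permutations _ (hL.erase a)),
    List.length_permutations, List.length_erase_of_mem ha]

theorem card_permutations_filter_getLast?_eq (L : List V) (a : V) :
    (L.permutations.toFinset.filter (·.getLast? = some a)).card =
      (L.permutations.toFinset.filter (·.head? = some a)).card := by
  refine card_nbij' List.reverse List.reverse ?_ ?_ (fun p _ => p.reverse_reverse)
    (fun p _ => p.reverse_reverse) <;>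
  · intro p
    simp only [coe_filter, List.mem_toFinset, List.mem_permutations, Set.mem_ofPred_eq,
      List.head?_reverse, List.getLast?_reverse]
    exact fun h => ⟨(List.reverse_perm p).trans h.1, h.2⟩

theorem card_permutations_filter_head?_ne_div {L : List V} (hL : L.Nodup) (a : V) :
    ((L.permutations.toFinset.filter (·.head? ≠ some a)).card : ℝ) /
        L.permutations.toFinset.card =
      if a ∈ L then ((L.length : ℝ) - 1) / L.length else 1 := by
  have hcard : L.permutations.toFinset.card = L.length.factorial := by
    rw [List.toFinset_card_of_nodup (List.nodup_permutations _ hL), List.length_permutations]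
  have hpos : (0 : ℝ) < L.length.factorial := by exact_mod_cast L.length.factorial_pos
  split_ifs with ha
  · obtain ⟨n, hn⟩ := Nat.exists_eq_add_one_of_ne_zero (List.length_pos_of_mem ha).ne'
    rw [filter_not, card_sdiff_of_subset (filter_subset _ _),
      card_permutations_filter_head?_eq hL ha, hcard, hn, Nat.add_sub_cancel,
      Nat.cast_sub (Nat.factorial_le n.le_succ), Nat.factorial_succ]
    have : (0 : ℝ) < n.factorial := by exact_mod_cast n.factorial_pos
    push_cast
    field_simp
  · rw [filter_true_of_mem, hcard, div_self hpos.ne']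
    intro p hp hhead
    rw [List.mem_toFinset, List.mem_permutations] at hp
    exact ha (hp.subset (List.mem_of_mem_head? hhead))

end Permutations

section Orders

variable {V : Type} [Fintype V] [DecidableEq V]

theorem orders_comm (α β : V → Bool) : orders α β = orders β α := by
  simp only [orders, ne_comm]

theorem nodup_and_mem_iff_of_mem_orders {α β : V → Bool} {p : List V} (hp : p ∈ orders α β) :
    p.Nodup ∧ ∀ v, v ∈ p ↔ α v ≠ β v := by
  rw [orders, List.mem_toFinset, List.mem_permutations] at hp
  exact ⟨hp.nodup_iff.2 (nodup_toList _), fun v => by simp [hp.mem_iff]⟩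

variable {C : Clause V} {s τ : V → Bool} {v₀ : V}

theorem filter_all_satClause_eq_product (hsat : ∀ α, satClause α C = true ↔ α ≠ τ)
    (hτ : ∀ v, s v ≠ τ v ↔ v = v₀) (γ : V → Bool) :
    (orders s γ ×ˢ orders γ s).filter
        (fun p => (flipSeq s γ p.1 ++ flipSeq γ s p.2).all fun α => satClause α C) =
      (orders s γ).filter (·.head? ≠ some v₀) ×ˢ (orders s γ).filter (·.getLast? ≠ some v₀) := by
  rw [orders_comm γ s, ← filter_product]
  refine filter_congr fun pq hpq => ?_
  obtain ⟨hp, hpD⟩ := nodup_and_mem_iff_of_mem_orders (mem_product.1 hpq).1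
  obtain ⟨hq, hqD⟩ := nodup_and_mem_iff_of_mem_orders (mem_product.1 hpq).2
  simp only [ne_eq, ← mem_flipSeq_iff_head?_eq hτ hp hpD, ← mem_flipSeq_iff_getLast?_eq hτ hq hqD,
    List.all_eq_true, List.mem_append, hsat]
  grind

theorem card_filter_all_satClause_div_card (hsat : ∀ α, satClause α C = true ↔ α ≠ τ)
    (hτ : ∀ v, s v ≠ τ v ↔ v = v₀) (γ : V → Bool) :
    (((orders s γ ×ˢ orders γ s).filter
        (fun p => (flipSeq s γ p.1 ++ flipSeq γ s p.2).all fun α => satClause α C)).card : ℝ) /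
        (orders s γ ×ˢ orders γ s).card =
      (if v₀ ∈ univ.filter (fun v => s v ≠ γ v) then
        ((#(univ.filter fun v => s v ≠ γ v) : ℝ) - 1) / #(univ.filter fun v => s v ≠ γ v)
      else 1) ^ 2 := by
  set D := univ.filter fun v => s v ≠ γ v
  have hfrac : ((#((orders s γ).filter (·.head? ≠ some v₀)) : ℝ) / #(orders s γ)) =
      if v₀ ∈ D then ((#D : ℝ) - 1) / #D else 1 := by
    have h := card_permutations_filter_head?_ne_div (nodup_toList D) v₀
    simp only [mem_toList, length_toList] at h
    exact h
  have hlast : #((orders s γ).filter (·.getLast? ≠ some v₀)) =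
      #((orders s γ).filter (·.head? ≠ some v₀)) := by
    rw [filter_not, filter_not, card_sdiff_of_subset (filter_subset _ _),
      card_sdiff_of_subset (filter_subset _ _), orders, card_permutations_filter_getLast?_eq]
  rw [filter_all_satClause_eq_product hsat hτ, orders_comm γ s, card_product, card_product, hlast,
    Nat.cast_mul, Nat.cast_mul, mul_div_mul_comm, hfrac, sq]

end Orders

section Falsifier

variable {V : Type}

theorem exists_mem_fst_eq_of_length_eq_card [Fintype V] {C : Clause V}
    (hw : C.length = Fintype.card V) (hnd : (C.map Prod.fst).Nodup) (v : V) :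
    ∃ l ∈ C, l.1 = v := by
  classical
  have huniv : (C.map Prod.fst).toFinset = univ :=
    eq_univ_of_card _ (by rw [List.toFinset_card_of_nodup hnd, List.length_map, hw])
  have hv : v ∈ (C.map Prod.fst).toFinset := huniv ▸ mem_univ v
  simpa only [List.mem_toFinset, List.mem_map] using hv

theorem exists_falsifier {C : Clause V} (hnd : (C.map Prod.fst).Nodup) :
    ∃ τ : V → Bool, ∀ l ∈ C, τ l.1 = !l.2 := by
  classical
  refine ⟨fun v => if h : ∃ l ∈ C, l.1 = v then !h.choose.2 else false, fun l hl => ?_⟩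
  have h : ∃ l' ∈ C, l'.1 = l.1 := ⟨l, hl, rfl⟩
  dsimp only
  rw [dif_pos h, List.inj_on_of_nodup_map hnd h.choose_spec.1 hl h.choose_spec.2]

theorem satClause_eq_true_iff_ne {C : Clause V} {τ : V → Bool} (hcov : ∀ v, ∃ l ∈ C, l.1 = v)
    (hτ : ∀ l ∈ C, τ l.1 = !l.2) (α : V → Bool) : satClause α C = true ↔ α ≠ τ := by
  simp only [satClause, List.any_eq_true, beq_iff_eq, ne_eq, funext_iff, not_forall]
  constructor
  · rintro ⟨l, hl, h⟩
    exact ⟨l.1, by simp [hτ l hl, h]⟩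
  · rintro ⟨v, hv⟩
    obtain ⟨l, hl, rfl⟩ := hcov v
    rw [hτ l hl] at hv
    exact ⟨l, hl, by simpa using hv⟩

theorem ne_falsifier_iff {C : Clause V} {s τ : V → Bool} (hcov : ∀ v, ∃ l ∈ C, l.1 = v)
    (hτ : ∀ l ∈ C, τ l.1 = !l.2) (hnd : (C.map Prod.fst).Nodup) {l₀ : V × Bool}
    (hs : C.filter (fun l => s l.1 == l.2) = [l₀]) (v : V) : s v ≠ τ v ↔ v = l₀.1 := by
  have hl₀ : l₀ ∈ C := List.mem_of_mem_filter (hs ▸ List.mem_singleton_self l₀)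
  obtain ⟨l, hl, rfl⟩ := hcov v
  have htrue : s l.1 = l.2 ↔ l = l₀ := by
    rw [← List.mem_singleton (a := l), ← hs, List.mem_filter]
    simp [hl]
  rw [hτ l hl, Bool.ne_not, htrue]
  exact ⟨congrArg Prod.fst, List.inj_on_of_nodup_map hnd hl hl₀⟩

end Falsifier

theorem sum_filter_ne_eq_sum_finset {V M : Type*} [Fintype V] [DecidableEq V] [AddCommMonoid M]
    (s : V → Bool) (f : Finset V → M) :
    ∑ γ : V → Bool, f (univ.filter fun v => s v ≠ γ v) = ∑ T : Finset V, f T := by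
  refine sum_nbij' (fun γ => univ.filter fun v => s v ≠ γ v)
    (fun T v => if v ∈ T then !s v else s v) (by simp) (by simp) ?_ ?_ (fun _ _ => rfl)
  · intro γ _
    funext v
    cases hs : s v <;> cases hγ : γ v <;> simp [hs, hγ]
  · intro T _
    ext v
    by_cases h : v ∈ T <;> simp [h]

theorem sum_range_choose_div_add_one (K : ℕ) :
    ∑ j ∈ range (K + 1), (K.choose j : ℝ) / (j + 1) = (2 ^ (K + 1) - 1) / (K + 1) := by
  have hterm : ∀ j ∈ range (K + 1),
      (K.choose j : ℝ) / (j + 1) = ((K + 1).choose (j + 1) : ℝ) / (K + 1) := by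
    intro j _
    rw [div_eq_div_iff (by positivity) (by positivity), mul_comm]
    exact_mod_cast Nat.add_one_mul_choose_eq K j
  rw [sum_congr rfl hterm, ← sum_div]
  congr 1
  have h := sum_range_succ' (fun i => ((K + 1).choose i : ℝ)) (K + 1)
  rw [← Nat.cast_sum, Nat.sum_range_choose] at h
  simp only [Nat.cast_pow, Nat.cast_ofNat, Nat.choose_zero_right, Nat.cast_one] at h
  linarith

theorem sum_finset_ite_mem_sq_eq_sum_choose {V : Type*} [Fintype V] [DecidableEq V] (v₀ : V) {K : ℕ}
    (hK : Fintype.card V = K + 1) :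
    ∑ T : Finset V, (if v₀ ∈ T then ((#T : ℝ) - 1) / #T else 1) ^ 2 =
      ∑ j ∈ range (K + 1), (K.choose j : ℝ) * (((j : ℝ) / (j + 1)) ^ 2 + 1) := by
  have hU : #(univ.erase v₀) = K := by rw [card_erase_of_mem (mem_univ _), card_univ, hK]; rfl
  rw [← powerset_univ, ← insert_erase (mem_univ v₀), sum_powerset_insert (notMem_erase _ _)]
  have hout : ∀ T ∈ (univ.erase v₀).powerset,
      (if v₀ ∈ T then ((#T : ℝ) - 1) / #T else 1) ^ 2 = (fun _ => (1 : ℝ)) #T := by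
    intro T hT
    rw [if_neg fun h => notMem_erase v₀ _ (mem_powerset.1 hT h), one_pow]
  have hin : ∀ T ∈ (univ.erase v₀).powerset,
      (if v₀ ∈ insert v₀ T then ((#(insert v₀ T) : ℝ) - 1) / #(insert v₀ T) else 1) ^ 2 =
        (fun j : ℕ => ((j : ℝ) / (j + 1)) ^ 2) #T := by
    intro T hT
    rw [if_pos (mem_insert_self _ _),
      card_insert_of_notMem fun h => notMem_erase v₀ _ (mem_powerset.1 hT h)]
    push_cast
    ring_nf
  rw [sum_congr rfl hout, sum_congr rfl hin, sum_powerset_apply_card (fun _ => (1 : ℝ)),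
    sum_powerset_apply_card (fun j : ℕ => ((j : ℝ) / (j + 1)) ^ 2), hU,
    ← sum_add_distrib]
  refine sum_congr rfl fun j _ => ?_
  simp only [nsmul_eq_mul]
  ring

theorem one_sub_two_div_le_sum_choose (K : ℕ) :
    1 - 2 / ((K : ℝ) + 1) ≤ ∑ j ∈ range (K + 1),
      (1 / 2 : ℝ) * ((K.choose j : ℝ) / 2 ^ K) * (((j : ℝ) / (j + 1)) ^ 2 + 1) := by
  have hterm : ∀ j ∈ range (K + 1), (K.choose j : ℝ) / 2 ^ K * (1 - 1 / (j + 1)) ≤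
      (1 / 2 : ℝ) * ((K.choose j : ℝ) / 2 ^ K) * (((j : ℝ) / (j + 1)) ^ 2 + 1) := by
    intro j _
    have hj : (j : ℝ) / (j + 1) = 1 - 1 / (j + 1) := by field_simp; ring
    rw [hj, mul_comm (1 / 2 : ℝ), mul_assoc]
    gcongr
    nlinarith [sq_nonneg (1 / ((j : ℝ) + 1))]
  have hsplit : ∀ j ∈ range (K + 1), (K.choose j : ℝ) / 2 ^ K * (1 - 1 / (j + 1)) =
      (K.choose j : ℝ) / 2 ^ K - (K.choose j : ℝ) / (j + 1) / 2 ^ K := by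
    intro j _
    ring
  have hchoose : ∑ j ∈ range (K + 1), (K.choose j : ℝ) = 2 ^ K := by
    exact_mod_cast Nat.sum_range_choose K
  refine le_trans ?_ (sum_le_sum hterm)
  rw [sum_congr rfl hsplit, sum_sub_distrib, ← sum_div, ← sum_div, hchoose,
    sum_range_choose_div_add_one, div_self (by positivity), sub_le_sub_iff_left, div_div,
    div_le_div_iff₀ (by positivity) (by positivity), pow_succ]
  nlinarith [pow_pos (two_pos : (0 : ℝ) < 2) K]

theorem probSatPair_self_eq {k : ℕ} {C : Clause (Fin k)} {s τ : Fin k → Bool} {v₀ : Fin k}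
    (hsat : ∀ α, satClause α C = true ↔ α ≠ τ) (hτ : ∀ v, s v ≠ τ v ↔ v = v₀) :
    probSatPair C s s =
      ∑ j ∈ range (k - 1 + 1),
        (1 / 2 : ℝ) * (((k - 1).choose j : ℝ) / 2 ^ (k - 1)) *
          (((j : ℝ) / ((j : ℝ) + 1)) ^ 2 + 1) := by
  obtain ⟨K, rfl⟩ : ∃ K, k = K + 1 := Nat.exists_eq_add_one_of_ne_zero v₀.pos.ne'
  rw [probSatPair, sum_congr rfl fun γ _ => card_filter_all_satClause_div_card hsat hτ γ,
    sum_filter_ne_eq_sum_finset s fun T => (if v₀ ∈ T then ((#T : ℝ) - 1) / #T else 1) ^ 2,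
    sum_finset_ite_mem_sq_eq_sum_choose v₀ (Fintype.card_fin _), sum_div, Nat.add_sub_cancel]
  refine sum_congr rfl fun j _ => ?_
  rw [pow_succ]
  ring

theorem stmt4_general {k : ℕ} (C : Clause (Fin k))
    (hw : C.length = k) (hnd : (C.map Prod.fst).Nodup)
    (s : Fin k → Bool)
    (hs : (C.filter fun l => s l.1 == l.2).length = 1) :
    probSatPair C s s =
      ∑ j ∈ Finset.range (k - 1 + 1),
        (1 / 2 : ℝ) * (((k - 1).choose j : ℝ) / 2 ^ (k - 1)) *
          (((j : ℝ) / ((j : ℝ) + 1)) ^ 2 + 1) ∧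
    1 - 2 / (k : ℝ) ≤ probSatPair C s s := by
  obtain ⟨l₀, hl₀⟩ := List.length_eq_one_iff.1 hs
  have hcov := exists_mem_fst_eq_of_length_eq_card (by rw [hw, Fintype.card_fin]) hnd
  obtain ⟨τ, hτ⟩ := exists_falsifier hnd
  have hprob := probSatPair_self_eq (satClause_eq_true_iff_ne hcov hτ)
    (ne_falsifier_iff hcov hτ hnd hl₀)
  refine ⟨hprob, ?_⟩
  have hkcast : (k : ℝ) = ((k - 1 : ℕ) : ℝ) + 1 := by rw [Nat.cast_pred l₀.1.pos, sub_add_cancel]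
  rw [hprob, hkcast]
  exact one_sub_two_div_le_sum_choose (k - 1)

/-- If `s = e` is an assignment that makes exactly one literal of the
width-`k` clause `C` (over `k` distinct variables) true, then, with `K := k - 1`, the
probability that the random concatenated sequence `σ₁ ∘ σ₂` (through a uniformly random `γ`)
satisfies `C` equals `∑_{j=0}^{K} (1/2)·(C(K,j)/2^K)·[(j/(j+1))² + 1]`, and this quantity is
at least `1 - 2/k`. -/
theorem stmt4 {k : ℕ} (hk : 3 ≤ k) (C : Clause (Fin k))
    (hw : C.length = k) (hnd : (C.map Prod.fst).Nodup)
    (s : Fin k → Bool)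
    (hs : (C.filter fun l => s l.1 == l.2).length = 1) :
    probSatPair C s s =
      ∑ j ∈ Finset.range (k - 1 + 1),
        (1 / 2 : ℝ) * (((k - 1).choose j : ℝ) / 2 ^ (k - 1)) *
          (((j : ℝ) / ((j : ℝ) + 1)) ^ 2 + 1) ∧
    1 - 2 / (k : ℝ) ≤ probSatPair C s s :=
  stmt4_general C hw hnd s hs
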